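/- Let ℓ ≥ 0 and let a_{−ℓ}, …, a_{ℓ} be 2ℓ+1 centered H-valued random variables, each with covariance operator E[a_m ⊗ a_m] = F_ℓ (a nonnegative self-adjoint nuclear operator), and set F̂_ℓ = (1/(2ℓ+1)) Σ_{m=−ℓ}^{ℓ} a_m ⊗ a_m. Then E‖F̂_ℓ − F_ℓ‖₁ ≤ 2‖F_ℓ‖₁. Consequently, if F̂_ℓ is the sample power spectrum operator of an isotropic H-valued spherical random field (so that Σ_ℓ ‖F_ℓ‖₁ < ∞), then for every ε > 0, Σ_{ℓ=0}^{∞} P(‖F̂_ℓ − F_ℓ‖₁ > ε) ≤ (2/ε) Σ_{ℓ=0}^{∞} ‖F_ℓ‖₁ < ∞, and hence ‖F̂_ℓ − F_ℓ‖₁ → 0 almost surely as ℓ → ∞. -/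

import Mathlib

open MeasureTheory InnerProductSpace Filter
open scoped ENNReal NNReal RealInnerProductSpace BigOperators Topology

noncomputable section

namespace RF

/-- Euclidean three-space. -/
abbrev E3 : Type := EuclideanSpace ℝ (Fin 3)

/-- The unit two-sphere in `ℝ³`. -/
abbrev S2 : Type := Metric.sphere (0 : E3) 1

/-- A linear isometry of `ℝ³` is a rotation (element of `SO(3)`) if it has determinant one. -/
def IsRotation (ρ : E3 ≃ₗᵢ[ℝ] E3) : Prop :=
  LinearMap.det (ρ.toLinearEquiv : E3 →ₗ[ℝ] E3) = 1

/-- The action of a linear isometry of `ℝ³` on the unit sphere. -/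
def rotate (ρ : E3 ≃ₗᵢ[ℝ] E3) (x : S2) : S2 :=
  ⟨ρ x, by
    have hx : ‖(x : E3)‖ = 1 := mem_sphere_zero_iff_norm.mp x.2
    rw [mem_sphere_zero_iff_norm, ρ.norm_map]
    exact hx⟩

variable {H : Type*} [NormedAddCommGroup H] [InnerProductSpace ℝ H]

/-- The rank-one operator `u ⊗ v : f ↦ ⟪f, v⟫ • u`. -/
def rankOne (u v : H) : H →L[ℝ] H := (innerSL ℝ v).smulRight u

/-- The trace (nuclear) norm of an operator, as an extended nonnegative real:
`‖A‖₁ = sup { ∑ⱼ |⟪A eⱼ, fⱼ⟫| }`, the supremum being over all pairs of finite orthonormal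
families.  It is finite precisely on trace-class operators, where it coincides with the
usual nuclear norm. -/
def traceNorm (A : H →L[ℝ] H) : ℝ≥0∞ :=
  ⨆ (n : ℕ) (e : Fin n → H) (f : Fin n → H) (_ : Orthonormal ℝ e) (_ : Orthonormal ℝ f),
    ∑ j, (‖⟪A (e j), f j⟫_ℝ‖₊ : ℝ≥0∞)

/-- The trace (nuclear) norm, as a real number (junk value `0` for non-nuclear operators). -/
def traceNormR (A : H →L[ℝ] H) : ℝ := (traceNorm A).toReal

/-- An operator is nuclear (trace class) if its trace norm is finite. -/
def IsNuclear (A : H →L[ℝ] H) : Prop := traceNorm A < ⊤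

/-- A fixed choice of index set for a Hilbert basis of `H`. -/
def bIdx (H : Type*) [NormedAddCommGroup H] [InnerProductSpace ℝ H] [CompleteSpace H] :
    Set H :=
  (exists_hilbertBasis ℝ H).choose

/-- A fixed choice of Hilbert basis (complete orthonormal system) of `H`. -/
def bStd (H : Type*) [NormedAddCommGroup H] [InnerProductSpace ℝ H] [CompleteSpace H] :
    HilbertBasis (bIdx H) ℝ H :=
  (exists_hilbertBasis ℝ H).choose_spec.choose

variable [CompleteSpace H]

/-- The trace of an operator, `Tr A = ∑ᵢ ⟪A eᵢ, eᵢ⟫` over a complete orthonormal system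
(basis-independent for nuclear operators). -/
def opTrace (A : H →L[ℝ] H) : ℝ := ∑' i : bIdx H, ⟪A (bStd H i), bStd H i⟫_ℝ

/-- The squared Hilbert–Schmidt norm `‖A‖₂² = ∑ᵢ ‖A eᵢ‖²` (junk value `0` if not summable). -/
def hsNormSq (A : H →L[ℝ] H) : ℝ := ∑' i : bIdx H, ‖A (bStd H i)‖ ^ 2

/-- The fourth power of the `4`-Schatten norm: `‖A‖₄⁴ = ‖A⋆A‖₂²`. -/
def schatten4Pow4 (A : H →L[ℝ] H) : ℝ :=
  hsNormSq ((ContinuousLinearMap.adjoint A).comp A)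

/-- An `H`-valued random variable is centered Gaussian if all its real pairings are centered
Gaussian random variables. -/
def IsCenteredGaussian {Ω : Type*} [MeasurableSpace Ω] (P : Measure Ω) (a : Ω → H) : Prop :=
  ∀ w : H, ∃ v : ℝ≥0,
    Measure.map (fun ω => ⟪a ω, w⟫_ℝ) P = ProbabilityTheory.gaussianReal 0 v

/-- The autocovariance operator `𝓡_{x,y} = E[T(x) ⊗ T(y)]` of a spherical random field. -/
def cov {Ω : Type*} [MeasurableSpace Ω] (P : Measure Ω) (T : S2 → Ω → H) (x y : S2) :
    H →L[ℝ] H :=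
  ∫ ω, rankOne (T x ω) (T y ω) ∂P

/-- An isotropic `H`-valued spherical random field: a jointly measurable collection of
centered, square-integrable `H`-valued random variables indexed by the sphere, whose
autocovariance operators are invariant under rotations. -/
structure IsIsotropicField {Ω : Type*} [MeasurableSpace Ω] (P : Measure Ω)
    (T : S2 → Ω → H) : Prop where
  jointMeas : StronglyMeasurable (Function.uncurry T)
  centered : ∀ x, ∫ ω, T x ω ∂P = 0
  sqInt : ∀ x, MemLp (T x) 2 P
  isotropic : ∀ ρ : E3 ≃ₗᵢ[ℝ] E3, IsRotation ρ → ∀ x y : S2,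
    cov P T (rotate ρ x) (rotate ρ y) = cov P T x y

/-- A measure on the sphere is the surface (Lebesgue) measure if it is rotation invariant
with total mass `4π`. -/
structure IsSphereMeasure (μ : Measure S2) : Prop where
  mass : μ Set.univ = ENNReal.ofReal (4 * Real.pi)
  invariant : ∀ ρ : E3 ≃ₗᵢ[ℝ] E3, IsRotation ρ → Measure.map (rotate ρ) μ = μ

/-- The `ℓ`-th Legendre polynomial (Rodrigues' formula). -/
def legendreP (ℓ : ℕ) : Polynomial ℝ :=
  ((2 ^ ℓ * ℓ.factorial : ℝ)⁻¹) •
    ((⇑(Polynomial.derivative (R := ℝ)))^[ℓ] ((Polynomial.X ^ 2 - 1) ^ ℓ))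

/-- The value of the `ℓ`-th Legendre polynomial. -/
def legval (ℓ : ℕ) (t : ℝ) : ℝ := (legendreP ℓ).eval t

/-- The north pole `e₃ = (0,0,1)` of the sphere. -/
def northPole : E3 := EuclideanSpace.single 2 1

/-- The central spherical harmonic `Y_{ℓ,0}(x) = √((2ℓ+1)/(4π)) P_ℓ(⟪x, e₃⟫)`. -/
def Y0 (ℓ : ℕ) (x : S2) : ℝ :=
  Real.sqrt ((2 * ℓ + 1) / (4 * Real.pi)) * legval ℓ ⟪(x : E3), northPole⟫_ℝ

/-- The power spectrum operator
`𝓕_ℓ = ∫_{S²×S²} 𝓡_{⟨x,y⟩} Y_{ℓ,0}(x) Y_{ℓ,0}(y) dx dy`. -/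
def psOp {Ω : Type*} [MeasurableSpace Ω] (P : Measure Ω) (T : S2 → Ω → H)
    (μ : Measure S2) (ℓ : ℕ) : H →L[ℝ] H :=
  ∫ p : S2 × S2, (Y0 ℓ p.1 * Y0 ℓ p.2) • cov P T p.1 p.2 ∂(μ.prod μ)

end RF
namespace RF

variable {H : Type*} [NormedAddCommGroup H] [InnerProductSpace ℝ H]

/-- A family of real fully normalized spherical harmonics for the measure `μ`:
jointly with `Y_{ℓ,0}` given by Legendre polynomials, they form an orthonormal basis of
`L²(S²; ℝ)` satisfying the addition formula. -/
structure IsSphericalHarmonics (μ : Measure S2) (Y : ℕ → ℤ → S2 → ℝ) : Prop where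
  meas : ∀ ℓ m, Measurable (Y ℓ m)
  zero_eq : ∀ ℓ, Y ℓ 0 = Y0 ℓ
  orthonormal : ∀ (ℓ : ℕ) (m : ℤ) (ℓ' : ℕ) (m' : ℤ),
    m ∈ Finset.Icc (-(ℓ : ℤ)) ℓ → m' ∈ Finset.Icc (-(ℓ' : ℤ)) ℓ' →
    ∫ x, Y ℓ m x * Y ℓ' m' x ∂μ = if ℓ = ℓ' ∧ m = m' then 1 else 0
  addition : ∀ (ℓ : ℕ) (x y : S2),
    ∑ m ∈ Finset.Icc (-(ℓ : ℤ)) ℓ, Y ℓ m x * Y ℓ m y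
      = (2 * ℓ + 1) / (4 * Real.pi) * legval ℓ ⟪(x : E3), (y : E3)⟫_ℝ
  complete : ∀ f : S2 → ℝ, MemLp f 2 μ →
    (∀ (ℓ : ℕ) (m : ℤ), m ∈ Finset.Icc (-(ℓ : ℤ)) ℓ → ∫ x, f x * Y ℓ m x ∂μ = 0) →
    f =ᵐ[μ] 0

variable [CompleteSpace H]

/-- The random harmonic coefficient `a_{ℓ,m} = ∫_{S²} T(x) Y_{ℓ,m}(x) dx`. -/
def harmCoef {Ω : Type*} (T : S2 → Ω → H) (μ : Measure S2)
    (Y : ℕ → ℤ → S2 → ℝ) (ℓ : ℕ) (m : ℤ) (ω : Ω) : H :=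
  ∫ x, Y ℓ m x • T x ω ∂μ

/-- The partial sum `T_L(x) = ∑_{ℓ=0}^L ∑_{m=-ℓ}^{ℓ} a_{ℓ,m} Y_{ℓ,m}(x)`. -/
def partialField {Ω : Type*} (T : S2 → Ω → H) (μ : Measure S2)
    (Y : ℕ → ℤ → S2 → ℝ) (L : ℕ) (x : S2) (ω : Ω) : H :=
  ∑ ℓ ∈ Finset.range (L + 1), ∑ m ∈ Finset.Icc (-(ℓ : ℤ)) ℓ,
    Y ℓ m x • harmCoef T μ Y ℓ m ω

/-- The sample power spectrum operator `𝓕̂_ℓ = (2ℓ+1)⁻¹ ∑ₘ a_{ℓ,m} ⊗ a_{ℓ,m}`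
(for `n = 2ℓ+1` coefficients). -/
def sampPS {Ω : Type*} {n : ℕ} (a : Fin n → Ω → H) (ω : Ω) : H →L[ℝ] H :=
  ((n : ℝ))⁻¹ • ∑ m, rankOne (a m ω) (a m ω)

/-- The sample reduced power spectrum `𝓒̂_ℓ = (2ℓ+1)⁻¹ ∑ₘ ‖a_{ℓ,m}‖²`. -/
def sampRed {Ω : Type*} {n : ℕ} (a : Fin n → Ω → H) (ω : Ω) : ℝ :=
  ((n : ℝ))⁻¹ * ∑ m, ‖a m ω‖ ^ 2

end RF

/-!
By the triangle inequality `‖𝓕̂ − 𝓕‖₁ ≤ ‖𝓕̂‖₁ + ‖𝓕‖₁`, and `‖𝓕̂‖₁ ≤ (2ℓ+1)⁻¹ ∑ₘ ‖aₘ‖²` because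
`‖u ⊗ u‖₁ ≤ ‖u‖²`. Expanding `‖aₘ‖²` in a Hilbert basis `(eᵢ)` (countable, as `H` is separable)
and integrating term by term gives `E‖aₘ‖² = ∑ᵢ ⟪𝓕 eᵢ, eᵢ⟫ ≤ ‖𝓕‖₁`, hence `E‖𝓕̂ − 𝓕‖₁ ≤ 2‖𝓕‖₁`.
Markov's inequality turns this into the tail bound, which is summable in `ℓ`, and Borel–Cantelli
gives almost sure convergence.
-/

namespace RF

section TraceNorm

variable {H : Type*} [NormedAddCommGroup H] [InnerProductSpace ℝ H]

lemma inner_rankOne_apply (u v x y : H) : ⟪rankOne u v x, y⟫_ℝ = ⟪x, v⟫_ℝ * ⟪u, y⟫_ℝ := by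
  simp only [rankOne, ContinuousLinearMap.smulRight_apply, innerSL_apply_apply,
    real_inner_smul_left, real_inner_comm x v]

lemma norm_rankOne_le (u v : H) : ‖rankOne u v‖ ≤ ‖u‖ * ‖v‖ := by
  rw [rankOne, ContinuousLinearMap.norm_smulRight_apply, innerSL_apply_norm, mul_comm]

lemma continuous_rankOne : Continuous fun p : H × H => rankOne p.1 p.2 := by
  unfold rankOne
  fun_prop

lemma le_traceNorm (A : H →L[ℝ] H) {n : ℕ} {e f : Fin n → H} (he : Orthonormal ℝ e)
    (hf : Orthonormal ℝ f) : ∑ j, (‖⟪A (e j), f j⟫_ℝ‖₊ : ℝ≥0∞) ≤ traceNorm A :=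
  le_iSup₂_of_le n e <| le_iSup₂_of_le f he <| le_iSup_of_le hf le_rfl

lemma traceNorm_le {A : H →L[ℝ] H} {C : ℝ≥0∞}
    (h : ∀ (n : ℕ) (e f : Fin n → H), Orthonormal ℝ e → Orthonormal ℝ f →
      ∑ j, (‖⟪A (e j), f j⟫_ℝ‖₊ : ℝ≥0∞) ≤ C) :
    traceNorm A ≤ C :=
  iSup₂_le fun n e => iSup₂_le fun f he => iSup_le (h n e f he)

lemma sum_le_traceNorm (A : H →L[ℝ] H) {ι : Type*} (s : Finset ι) {e f : ι → H}
    (he : Orthonormal ℝ e) (hf : Orthonormal ℝ f) :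
    ∑ i ∈ s, (‖⟪A (e i), f i⟫_ℝ‖₊ : ℝ≥0∞) ≤ traceNorm A := by
  let σ : Fin s.card ≃ s := s.equivFin.symm
  have hσ : Function.Injective fun j => (σ j : ι) := Subtype.val_injective.comp σ.injective
  calc ∑ i ∈ s, (‖⟪A (e i), f i⟫_ℝ‖₊ : ℝ≥0∞)
      = ∑ j, (‖⟪A (e (σ j)), f (σ j)⟫_ℝ‖₊ : ℝ≥0∞) := by
        rw [← Finset.sum_coe_sort s]
        exact (σ.sum_comp fun i : s => (‖⟪A (e i), f i⟫_ℝ‖₊ : ℝ≥0∞)).symm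
    _ ≤ traceNorm A := le_traceNorm A (he.comp _ hσ) (hf.comp _ hσ)

lemma tsum_ofReal_inner_le_traceNorm (A : H →L[ℝ] H) {ι : Type*} {v : ι → H}
    (hv : Orthonormal ℝ v) : ∑' i, ENNReal.ofReal ⟪A (v i), v i⟫_ℝ ≤ traceNorm A := by
  rw [ENNReal.tsum_eq_iSup_sum]
  refine iSup_le fun s => (Finset.sum_le_sum fun i _ => ?_).trans (sum_le_traceNorm A s hv hv)
  rw [← enorm_eq_nnnorm, Real.enorm_eq_ofReal_abs]
  exact ENNReal.ofReal_le_ofReal (le_abs_self _)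

lemma traceNorm_zero : traceNorm (0 : H →L[ℝ] H) = 0 := by
  simp [traceNorm]

lemma traceNorm_neg (A : H →L[ℝ] H) : traceNorm (-A) = traceNorm A := by
  simp only [traceNorm, neg_apply, inner_neg_left, nnnorm_neg]

lemma traceNorm_add_le (A B : H →L[ℝ] H) : traceNorm (A + B) ≤ traceNorm A + traceNorm B := by
  refine traceNorm_le fun n e f he hf => ?_
  calc ∑ j, (‖⟪(A + B) (e j), f j⟫_ℝ‖₊ : ℝ≥0∞)
      ≤ ∑ j, ((‖⟪A (e j), f j⟫_ℝ‖₊ : ℝ≥0∞) + ‖⟪B (e j), f j⟫_ℝ‖₊) := by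
        gcongr with j
        simp only [add_apply, inner_add_left]
        exact_mod_cast nnnorm_add_le _ _
    _ ≤ traceNorm A + traceNorm B := by
        rw [Finset.sum_add_distrib]
        exact add_le_add (le_traceNorm A he hf) (le_traceNorm B he hf)

lemma traceNorm_sub_le (A B : H →L[ℝ] H) : traceNorm (A - B) ≤ traceNorm A + traceNorm B := by
  simpa [sub_eq_add_neg, traceNorm_neg] using traceNorm_add_le A (-B)

lemma traceNorm_sum_le {ι : Type*} (s : Finset ι) (A : ι → H →L[ℝ] H) :
    traceNorm (∑ i ∈ s, A i) ≤ ∑ i ∈ s, traceNorm (A i) :=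
  Finset.le_sum_of_subadditive _ traceNorm_zero.le traceNorm_add_le s A

lemma traceNorm_smul_le (c : ℝ) (A : H →L[ℝ] H) : traceNorm (c • A) ≤ ‖c‖ₑ * traceNorm A := by
  refine traceNorm_le fun n e f he hf => ?_
  simp only [smul_apply, real_inner_smul_left, nnnorm_mul, ENNReal.coe_mul,
    ← Finset.mul_sum, enorm_eq_nnnorm]
  exact mul_le_mul_right (le_traceNorm A he hf) _

lemma traceNorm_rankOne_le (u v : H) : traceNorm (rankOne u v) ≤ ‖u‖ₑ * ‖v‖ₑ := by
  refine traceNorm_le fun n e f he hf => ?_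
  have bessel : ∀ {g : Fin n → H}, Orthonormal ℝ g → ∀ w : H, √(∑ j, |⟪g j, w⟫_ℝ| ^ 2) ≤ ‖w‖ :=
    fun hg w => by
      refine (Real.sqrt_le_sqrt ?_).trans_eq (Real.sqrt_sq (norm_nonneg w))
      simpa using hg.sum_inner_products_le (s := .univ) w
  have hcs : ∑ j, |⟪e j, v⟫_ℝ| * |⟪u, f j⟫_ℝ| ≤ ‖v‖ * ‖u‖ := by
    refine (Real.sum_mul_le_sqrt_mul_sqrt _ _ _).trans
      (mul_le_mul (bessel he v) ?_ (Real.sqrt_nonneg _) (norm_nonneg v))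
    simpa only [real_inner_comm u] using bessel hf u
  calc ∑ j, (‖⟪rankOne u v (e j), f j⟫_ℝ‖₊ : ℝ≥0∞)
      = ENNReal.ofReal (∑ j, |⟪e j, v⟫_ℝ| * |⟪u, f j⟫_ℝ|) := by
        rw [ENNReal.ofReal_sum_of_nonneg fun j _ => by positivity]
        simp only [← enorm_eq_nnnorm, Real.enorm_eq_ofReal_abs, inner_rankOne_apply, abs_mul]
    _ ≤ ENNReal.ofReal (‖v‖ * ‖u‖) := ENNReal.ofReal_le_ofReal hcs
    _ = ‖u‖ₑ * ‖v‖ₑ := by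
        rw [ENNReal.ofReal_mul (norm_nonneg v), ofReal_norm, ofReal_norm, mul_comm]

lemma traceNorm_sampPS_le {Ω : Type*} {n : ℕ} (a : Fin n → Ω → H) (ω : Ω) :
    traceNorm (sampPS a ω) ≤ (n : ℝ≥0∞)⁻¹ * ∑ m, ‖a m ω‖ₑ ^ 2 := by
  have hc : ‖(n : ℝ)⁻¹‖ₑ ≤ (n : ℝ≥0∞)⁻¹ := by
    rcases Nat.eq_zero_or_pos n with rfl | hn
    · simp
    · rw [enorm_inv (by positivity), Real.enorm_natCast]
  calc traceNorm (sampPS a ω)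
      ≤ ‖(n : ℝ)⁻¹‖ₑ * ∑ m, traceNorm (rankOne (a m ω) (a m ω)) :=
        (traceNorm_smul_le _ _).trans (mul_le_mul_right (traceNorm_sum_le _ _) _)
    _ ≤ (n : ℝ≥0∞)⁻¹ * ∑ m, ‖a m ω‖ₑ ^ 2 := by
        gcongr with m
        exact (traceNorm_rankOne_le _ _).trans_eq (sq _).symm

end TraceNorm

section HilbertBasis

variable {H : Type*} [NormedAddCommGroup H] [InnerProductSpace ℝ H]

lemma countable_of_orthonormal [TopologicalSpace.SeparableSpace H] {ι : Type*} {v : ι → H}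
    (hv : Orthonormal ℝ v) : Countable ι := by
  refine Pairwise.countable_of_isOpen_disjoint (s := fun i => Metric.ball (v i) (1 / 2))
    (fun i j hij => Metric.ball_disjoint_ball ?_) (fun _ => Metric.isOpen_ball)
    (fun _ => Metric.nonempty_ball.2 (by norm_num))
  have hsq : dist (v i) (v j) ^ 2 = 2 := by
    rw [dist_eq_norm, norm_sub_sq_real, hv.1 i, hv.1 j, hv.2 hij]
    norm_num
  nlinarith [dist_nonneg (x := v i) (y := v j)]

lemma enorm_sq_eq_tsum_ofReal_inner_sq {ι : Type*} (b : HilbertBasis ι ℝ H) (u : H) :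
    ‖u‖ₑ ^ 2 = ∑' i, ENNReal.ofReal (⟪u, b i⟫_ℝ ^ 2) := by
  have hsq : ∀ i, ⟪u, b i⟫_ℝ * ⟪b i, u⟫_ℝ = ⟪u, b i⟫_ℝ ^ 2 := fun i => by
    rw [real_inner_comm (b i) u, sq]
  rw [← ENNReal.ofReal_tsum_of_nonneg (fun i => sq_nonneg _)
      ((b.summable_inner_mul_inner u u).congr hsq), ← tsum_congr hsq,
    b.tsum_inner_mul_inner, real_inner_self_eq_norm_sq, ENNReal.ofReal_pow (norm_nonneg u),
    ofReal_norm]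

end HilbertBasis

section Probability

variable {H : Type*} [NormedAddCommGroup H] [InnerProductSpace ℝ H]
  {Ω : Type*} [MeasurableSpace Ω] {P : Measure Ω}

lemma lowerSemicontinuous_traceNorm : LowerSemicontinuous (traceNorm : (H →L[ℝ] H) → ℝ≥0∞) := by
  refine lowerSemicontinuous_iSup fun n => lowerSemicontinuous_iSup fun e =>
    lowerSemicontinuous_iSup fun f => lowerSemicontinuous_iSup fun _ =>
    lowerSemicontinuous_iSup fun _ => Continuous.lowerSemicontinuous ?_
  fun_prop

lemma aemeasurable_traceNorm {G : Ω → H →L[ℝ] H} (hG : AEStronglyMeasurable G P) :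
    AEMeasurable (fun ω => traceNorm (G ω)) P := by
  borelize (H →L[ℝ] H)
  exact lowerSemicontinuous_traceNorm.measurable.comp_aemeasurable hG.aemeasurable

lemma aestronglyMeasurable_rankOne_self {a : Ω → H} (ha : AEStronglyMeasurable a P) :
    AEStronglyMeasurable (fun ω => rankOne (a ω) (a ω)) P :=
  continuous_rankOne.comp_aestronglyMeasurable (ha.prodMk ha)

lemma aestronglyMeasurable_sampPS {n : ℕ} {a : Fin n → Ω → H}
    (ha : ∀ m, AEStronglyMeasurable (a m) P) : AEStronglyMeasurable (sampPS a) P := by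
  unfold sampPS
  exact (Finset.aestronglyMeasurable_fun_sum _
    fun m _ => aestronglyMeasurable_rankOne_self (ha m)).const_smul ((n : ℝ)⁻¹)

lemma integrable_rankOne_self {a : Ω → H} (ha : MemLp a 2 P) :
    Integrable (fun ω => rankOne (a ω) (a ω)) P :=
  ha.norm.integrable_sq.mono' (aestronglyMeasurable_rankOne_self ha.1)
    (ae_of_all _ fun _ => (norm_rankOne_le _ _).trans_eq (sq _).symm)

variable [CompleteSpace H]

lemma integral_inner_sq {a : Ω → H} {F : H →L[ℝ] H} (ha : MemLp a 2 P)
    (hF : ∫ ω, rankOne (a ω) (a ω) ∂P = F) (w : H) :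
    ∫ ω, ⟪a ω, w⟫_ℝ ^ 2 ∂P = ⟪F w, w⟫_ℝ := by
  have hint := integrable_rankOne_self ha
  rw [← hF, ContinuousLinearMap.integral_apply hint, real_inner_comm,
    ← integral_inner (hint.apply_continuousLinearMap w)]
  simp only [← real_inner_comm w, inner_rankOne_apply, sq]

lemma lintegral_ofReal_inner_sq {a : Ω → H} {F : H →L[ℝ] H} (ha : MemLp a 2 P)
    (hF : ∫ ω, rankOne (a ω) (a ω) ∂P = F) (w : H) :
    ∫⁻ ω, ENNReal.ofReal (⟪a ω, w⟫_ℝ ^ 2) ∂P = ENNReal.ofReal ⟪F w, w⟫_ℝ := by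
  have hmem : MemLp (fun ω => ⟪a ω, w⟫_ℝ) 2 P := by
    simpa only [real_inner_comm w] using ha.const_inner (𝕜 := ℝ) w
  rw [← integral_inner_sq ha hF w,
    ofReal_integral_eq_lintegral_ofReal hmem.integrable_sq (ae_of_all _ fun _ => sq_nonneg _)]

lemma lintegral_enorm_sq_le_traceNorm [TopologicalSpace.SeparableSpace H] {a : Ω → H}
    {F : H →L[ℝ] H} (ha : MemLp a 2 P) (hF : ∫ ω, rankOne (a ω) (a ω) ∂P = F) :
    ∫⁻ ω, ‖a ω‖ₑ ^ 2 ∂P ≤ traceNorm F := by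
  obtain ⟨ι, b, -⟩ := exists_hilbertBasis ℝ H
  have : Countable ι := countable_of_orthonormal b.orthonormal
  calc ∫⁻ ω, ‖a ω‖ₑ ^ 2 ∂P
      = ∑' i, ∫⁻ ω, ENNReal.ofReal (⟪a ω, b i⟫_ℝ ^ 2) ∂P := by
        simp_rw [enorm_sq_eq_tsum_ofReal_inner_sq b]
        exact lintegral_tsum fun i =>
          (ha.1.inner aestronglyMeasurable_const).aemeasurable.pow_const 2 |>.ennreal_ofReal
    _ = ∑' i, ENNReal.ofReal ⟪F (b i), b i⟫_ℝ := by
        simp_rw [lintegral_ofReal_inner_sq ha hF]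
    _ ≤ traceNorm F := tsum_ofReal_inner_le_traceNorm F b.orthonormal

lemma lintegral_traceNorm_sampPS_sub_le [IsProbabilityMeasure P]
    [TopologicalSpace.SeparableSpace H] {n : ℕ} (hn : n ≠ 0) {a : Fin n → Ω → H}
    {F : H →L[ℝ] H} (ha : ∀ m, MemLp (a m) 2 P)
    (hF : ∀ m, ∫ ω, rankOne (a m ω) (a m ω) ∂P = F) :
    ∫⁻ ω, traceNorm (sampPS a ω - F) ∂P ≤ 2 * traceNorm F :=
  calc ∫⁻ ω, traceNorm (sampPS a ω - F) ∂P
      ≤ ∫⁻ ω, ((n : ℝ≥0∞)⁻¹ * ∑ m, ‖a m ω‖ₑ ^ 2 + traceNorm F) ∂P :=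
        lintegral_mono fun ω =>
          (traceNorm_sub_le _ _).trans (add_le_add_left (traceNorm_sampPS_le a ω) _)
    _ = (n : ℝ≥0∞)⁻¹ * ∑ m, ∫⁻ ω, ‖a m ω‖ₑ ^ 2 ∂P + traceNorm F := by
        rw [lintegral_add_right _ measurable_const, lintegral_const, measure_univ, mul_one,
          lintegral_const_mul' _ _ (ENNReal.inv_ne_top.2 (Nat.cast_ne_zero.2 hn)),
          lintegral_finsetSum' _ fun m _ => (ha m).1.enorm.pow_const 2]
    _ ≤ (n : ℝ≥0∞)⁻¹ * ∑ _m : Fin n, traceNorm F + traceNorm F := by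
        gcongr with m
        exact lintegral_enorm_sq_le_traceNorm (ha m) (hF m)
    _ = 2 * traceNorm F := by
        rw [Finset.sum_const, Finset.card_univ, Fintype.card_fin, nsmul_eq_mul, ← mul_assoc,
          ENNReal.inv_mul_cancel (Nat.cast_ne_zero.2 hn) (ENNReal.natCast_ne_top n), one_mul,
          two_mul]

end Probability

section Convergence

variable {Ω : Type*} [MeasurableSpace Ω] {P : Measure Ω}

lemma measure_ofReal_lt_le_of_lintegral_le {f : Ω → ℝ≥0∞} (hf : AEMeasurable f P) {c : ℝ}
    {C : ℝ≥0∞} (hC : ∫⁻ ω, f ω ∂P ≤ ENNReal.ofReal c * C) {ε : ℝ} (hε : 0 < ε) :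
    P {ω | ENNReal.ofReal ε < f ω} ≤ ENNReal.ofReal (c / ε) * C :=
  calc P {ω | ENNReal.ofReal ε < f ω}
      ≤ P {ω | ENNReal.ofReal ε ≤ f ω} := measure_mono <| Set.setOf_subset_setOf.2 fun _ => le_of_lt
    _ ≤ (∫⁻ ω, f ω ∂P) / ENNReal.ofReal ε :=
        meas_ge_le_lintegral_div hf (ENNReal.ofReal_pos.2 hε).ne' ENNReal.ofReal_ne_top
    _ ≤ ENNReal.ofReal c * C / ENNReal.ofReal ε := by gcongr
    _ = ENNReal.ofReal (c / ε) * C := by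
        rw [ENNReal.mul_div_right_comm, ← ENNReal.ofReal_div_of_pos hε]

lemma ae_tendsto_zero_of_tsum_measure_ofReal_lt_ne_top {X : ℕ → Ω → ℝ≥0∞}
    (h : ∀ ε : ℝ, 0 < ε → ∑' ℓ, P {ω | ENNReal.ofReal ε < X ℓ ω} ≠ ⊤) :
    ∀ᵐ ω ∂P, Tendsto (fun ℓ => X ℓ ω) atTop (𝓝 0) := by
  have hk : ∀ k : ℕ, ∀ᵐ ω ∂P, ∀ᶠ ℓ in atTop, X ℓ ω ≤ ((k + 1 : ℕ) : ℝ≥0∞)⁻¹ := fun k => by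
    filter_upwards [ae_eventually_notMem (h ((k + 1 : ℕ) : ℝ)⁻¹ (by positivity))] with ω hω
    filter_upwards [hω] with ℓ hℓ
    simpa only [not_lt, ENNReal.ofReal_inv_of_pos (Nat.cast_pos.2 k.succ_pos),
      ENNReal.ofReal_natCast] using hℓ
  filter_upwards [ae_all_iff.2 hk] with ω hω
  refine ENNReal.tendsto_nhds_zero.2 fun ε hε => ?_
  obtain ⟨k, hkε⟩ := ENNReal.exists_inv_nat_lt hε.ne'
  refine (hω k).mono fun ℓ hℓ => hℓ.trans (le_trans ?_ hkε.le)
  exact ENNReal.inv_le_inv.2 (Nat.cast_le.2 k.le_succ)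

end Convergence

theorem samplePS_consistency_general
    {H : Type*} [NormedAddCommGroup H] [InnerProductSpace ℝ H] [CompleteSpace H]
    [TopologicalSpace.SeparableSpace H]
    {Ω : Type*} [MeasurableSpace Ω] (P : Measure Ω) [IsProbabilityMeasure P]
    (a : (ℓ : ℕ) → Fin (2 * ℓ + 1) → Ω → H) (F : ℕ → H →L[ℝ] H)
    (hL2 : ∀ ℓ m, MemLp (a ℓ m) 2 P)
    (hcov : ∀ ℓ m, ∫ ω, rankOne (a ℓ m ω) (a ℓ m ω) ∂P = F ℓ)
    (hsum : ∑' ℓ, traceNorm (F ℓ) ≠ ⊤) :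
    (∀ ℓ, ∫⁻ ω, traceNorm (sampPS (a ℓ) ω - F ℓ) ∂P ≤ 2 * traceNorm (F ℓ)) ∧
      (∀ ε : ℝ, 0 < ε →
        ∑' ℓ, P {ω | ENNReal.ofReal ε < traceNorm (sampPS (a ℓ) ω - F ℓ)}
            ≤ ENNReal.ofReal (2 / ε) * ∑' ℓ, traceNorm (F ℓ) ∧
          ∑' ℓ, P {ω | ENNReal.ofReal ε < traceNorm (sampPS (a ℓ) ω - F ℓ)} < ⊤) ∧
      ∀ᵐ ω ∂P, Tendsto (fun ℓ => traceNorm (sampPS (a ℓ) ω - F ℓ)) atTop (𝓝 0) := by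
  have hmean : ∀ ℓ, ∫⁻ ω, traceNorm (sampPS (a ℓ) ω - F ℓ) ∂P ≤ 2 * traceNorm (F ℓ) :=
    fun ℓ => lintegral_traceNorm_sampPS_sub_le (by omega) (hL2 ℓ) (hcov ℓ)
  have htail : ∀ ε : ℝ, 0 < ε →
      ∑' ℓ, P {ω | ENNReal.ofReal ε < traceNorm (sampPS (a ℓ) ω - F ℓ)}
        ≤ ENNReal.ofReal (2 / ε) * ∑' ℓ, traceNorm (F ℓ) := fun ε hε => by
    rw [← ENNReal.tsum_mul_left]
    refine ENNReal.tsum_le_tsum fun ℓ => measure_ofReal_lt_le_of_lintegral_le ?_ ?_ hε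
    · exact aemeasurable_traceNorm
        ((aestronglyMeasurable_sampPS fun m => (hL2 ℓ m).1).sub aestronglyMeasurable_const)
    · simpa only [ENNReal.ofReal_ofNat] using hmean ℓ
  have hfinite : ∀ ε : ℝ, 0 < ε →
      ∑' ℓ, P {ω | ENNReal.ofReal ε < traceNorm (sampPS (a ℓ) ω - F ℓ)} < ⊤ := fun ε hε =>
    (htail ε hε).trans_lt (ENNReal.mul_lt_top ENNReal.ofReal_lt_top hsum.lt_top)
  exact ⟨hmean, fun ε hε => ⟨htail ε hε, hfinite ε hε⟩,
    ae_tendsto_zero_of_tsum_measure_ofReal_lt_ne_top fun ε hε => (hfinite ε hε).ne⟩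

/-- Consistency of the sample power spectrum operators.
If `a_{-ℓ}, …, a_ℓ` are `2ℓ+1` centered `H`-valued random variables with common covariance
operator `𝓕_ℓ` (nonnegative, self-adjoint, nuclear), then the sample power spectrum operator
`𝓕̂_ℓ` satisfies `E‖𝓕̂_ℓ − 𝓕_ℓ‖₁ ≤ 2‖𝓕_ℓ‖₁`.  Consequently, if `∑_ℓ ‖𝓕_ℓ‖₁ < ∞` (as holds for
the power spectrum of an isotropic field), then for every `ε > 0`,
`∑_ℓ P(‖𝓕̂_ℓ − 𝓕_ℓ‖₁ > ε) ≤ (2/ε) ∑_ℓ ‖𝓕_ℓ‖₁ < ∞`, and `‖𝓕̂_ℓ − 𝓕_ℓ‖₁ → 0` almost surely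
as `ℓ → ∞`. -/
theorem samplePS_consistency
    {H : Type*} [NormedAddCommGroup H] [InnerProductSpace ℝ H] [CompleteSpace H]
    [TopologicalSpace.SeparableSpace H]
    {Ω : Type*} [MeasurableSpace Ω] (P : Measure Ω) [IsProbabilityMeasure P]
    (a : (ℓ : ℕ) → Fin (2 * ℓ + 1) → Ω → H) (F : ℕ → H →L[ℝ] H)
    (hmeas : ∀ ℓ m, AEStronglyMeasurable (a ℓ m) P)
    (hL2 : ∀ ℓ m, MemLp (a ℓ m) 2 P)
    (hcent : ∀ ℓ m, ∫ ω, a ℓ m ω ∂P = 0)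
    (hcov : ∀ ℓ m, ∫ ω, rankOne (a ℓ m ω) (a ℓ m ω) ∂P = F ℓ)
    (hsa : ∀ ℓ, ContinuousLinearMap.adjoint (F ℓ) = F ℓ)
    (hnn : ∀ ℓ (f : H), 0 ≤ ⟪F ℓ f, f⟫_ℝ)
    (hnuc : ∀ ℓ, IsNuclear (F ℓ))
    (hsum : ∑' ℓ, traceNorm (F ℓ) ≠ ⊤) :
    (∀ ℓ, ∫⁻ ω, traceNorm (sampPS (a ℓ) ω - F ℓ) ∂P ≤ 2 * traceNorm (F ℓ)) ∧
      (∀ ε : ℝ, 0 < ε →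
        ∑' ℓ, P {ω | ENNReal.ofReal ε < traceNorm (sampPS (a ℓ) ω - F ℓ)}
            ≤ ENNReal.ofReal (2 / ε) * ∑' ℓ, traceNorm (F ℓ) ∧
          ∑' ℓ, P {ω | ENNReal.ofReal ε < traceNorm (sampPS (a ℓ) ω - F ℓ)} < ⊤) ∧
      ∀ᵐ ω ∂P, Tendsto (fun ℓ => traceNorm (sampPS (a ℓ) ω - F ℓ)) atTop (𝓝 0) :=
  samplePS_consistency_general P a F hL2 hcov hsum

end RF
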